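/- Let a, b be integers with gcd(b, p) = 1 for a prime p, and F the sequence F₀ = 0, F₁ = 1, F_{n+2} = a·F_{n+1} - b·F_n. Then the period k(p²) of F modulo p² is equal to either k(p) or p·k(p), where k(p) is the period modulo p. -/

import Mathlib

/-!
Put `A = F k` and `B = F (k + 1) - 1`. The addition formula
`F (k + n) = F k * (F (n + 1) - a * F n) + F (k + 1) * F n` shows that `k` is a period of `F`
modulo `M` exactly when `M` divides `A` and `B`. Iterating it, `F (j * k) ≡ j * A` and
`F (j * k + 1) ≡ 1 + j * B` modulo `M ^ 2`, because products of two multiples of `M` vanish there.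
With `k = k(p)` and `j = p` this makes `p * k(p)` a period modulo `p ^ 2`, so
`k(p) ∣ k(p ^ 2) ∣ p * k(p)`.
-/

variable {R : Type*} [CommRing R]

def IsPeriodMod (M : R) (F : ℕ → R) (k : ℕ) : Prop :=
  ∀ n, M ∣ F (n + k) - F n

namespace IsPeriodMod

variable {M : R} {F : ℕ → R} {k l : ℕ}

theorem of_dvd {M' : R} (hM : M' ∣ M) (h : IsPeriodMod M F k) : IsPeriodMod M' F k :=
  fun n => hM.trans (h n)

theorem add (hk : IsPeriodMod M F k) (hl : IsPeriodMod M F l) : IsPeriodMod M F (k + l) := by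
  intro n
  rw [← add_assoc, ← sub_add_sub_cancel _ (F (n + k))]
  exact (hl (n + k)).add (hk n)

theorem of_add (hk : IsPeriodMod M F k) (hkl : IsPeriodMod M F (k + l)) :
    IsPeriodMod M F l := by
  intro n
  have := (hkl n).sub (hk (n + l))
  rwa [add_right_comm, ← add_assoc, sub_sub_sub_cancel_left] at this

theorem nat_mul (h : IsPeriodMod M F k) (j : ℕ) : IsPeriodMod M F (j * k) := by
  induction j with
  | zero => simp [IsPeriodMod]
  | succ j ih => simpa [add_mul, add_comm] using h.add ih

theorem mod (hk : IsPeriodMod M F k) (hl : IsPeriodMod M F l) : IsPeriodMod M F (l % k) := by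
  rw [← Nat.div_add_mod l k, mul_comm] at hl
  exact (hk.nat_mul _).of_add hl

theorem dvd_of_isLeast {k₀ : ℕ} (hk₀ : IsLeast {k | 0 < k ∧ IsPeriodMod M F k} k₀)
    (h : IsPeriodMod M F k) : k₀ ∣ k := by
  refine Nat.dvd_of_mod_eq_zero (Nat.eq_zero_of_not_pos fun hpos => ?_)
  have := hk₀.2 ⟨hpos, hk₀.1.2.mod h⟩
  exact this.not_gt (Nat.mod_lt _ hk₀.1.1)

end IsPeriodMod

structure IsLucasSequence (a b : R) (F : ℕ → R) : Prop where
  zero : F 0 = 0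
  one : F 1 = 1
  add_two : ∀ n, F (n + 2) = a * F (n + 1) - b * F n

namespace IsLucasSequence

variable {a b : R} {F : ℕ → R} (hF : IsLucasSequence a b F)
include hF

theorem add_eq (k n : ℕ) : F (k + n) = F k * (F (n + 1) - a * F n) + F (k + 1) * F n := by
  induction n using Nat.twoStepInduction with
  | zero => simp [hF.zero, hF.one]
  | one => simp [hF.zero, hF.one, hF.add_two 0]
  | more n ih₀ ih₁ =>
    rw [← add_assoc, hF.add_two, add_assoc, add_assoc, ih₀, ih₁]
    rw [show n + (2 + 1) = n + 1 + 2 from rfl, hF.add_two (n + 1), hF.add_two n]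
    ring

theorem isPeriodMod_iff {M : R} {k : ℕ} :
    IsPeriodMod M F k ↔ M ∣ F k ∧ M ∣ F (k + 1) - 1 := by
  refine ⟨fun h => ?_, fun ⟨hA, hB⟩ n => ?_⟩
  · simpa [hF.zero, hF.one, add_comm] using And.intro (h 0) (h 1)
  · rw [add_comm, hF.add_eq]
    have : F k * (F (n + 1) - a * F n) + F (k + 1) * F n - F n
        = F k * (F (n + 1) - a * F n) + (F (k + 1) - 1) * F n := by ring
    rw [this]
    exact (hA.mul_right _).add (hB.mul_right _)

theorem sq_dvd_sub_nat_mul {M : R} {k : ℕ} (hA : M ∣ F k) (hB : M ∣ F (k + 1) - 1) (j : ℕ) :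
    M ^ 2 ∣ F (j * k) - j * F k ∧ M ^ 2 ∣ F (j * k + 1) - 1 - j * (F (k + 1) - 1) := by
  have sq_dvd {x y : R} (hx : M ∣ x) (hy : M ∣ y) : M ^ 2 ∣ x * y := sq M ▸ mul_dvd_mul hx hy
  induction j with
  | zero => simp [hF.zero, hF.one]
  | succ j ih =>
    obtain ⟨ih₀, ih₁⟩ := ih
    rw [add_one_mul, add_comm _ k, Nat.cast_succ]
    constructor
    · rw [hF.add_eq]
      have : F k * (F (j * k + 1) - a * F (j * k)) + F (k + 1) * F (j * k) - (j + 1) * F k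
          = F k * (F (j * k + 1) - 1 - j * (F (k + 1) - 1)) + (F (k + 1) - a * F k) *
              (F (j * k) - j * F k) + j * (2 * (F k * (F (k + 1) - 1)) - a * (F k * F k)) := by
        ring
      rw [this]
      exact ((ih₁.mul_left _).add (ih₀.mul_left _)).add
        ((((sq_dvd hA hB).mul_left 2).sub ((sq_dvd hA hA).mul_left a)).mul_left _)
    · rw [add_assoc, hF.add_eq, hF.add_two (j * k)]
      have : F k * (a * F (j * k + 1) - b * F (j * k) - a * F (j * k + 1))
            + F (k + 1) * F (j * k + 1) - 1 - (j + 1) * (F (k + 1) - 1)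
          = F (k + 1) * (F (j * k + 1) - 1 - j * (F (k + 1) - 1)) - b * F k *
              (F (j * k) - j * F k) + j * ((F (k + 1) - 1) * (F (k + 1) - 1) - b * (F k * F k)) := by
        ring
      rw [this]
      exact ((ih₁.mul_left _).sub (ih₀.mul_left _)).add
        (((sq_dvd hB hB).sub ((sq_dvd hA hA).mul_left b)).mul_left _)

theorem isPeriodMod_sq_mul {M : R} {k : ℕ} (h : IsPeriodMod M F k) {j : ℕ} (hj : M ∣ j) :
    IsPeriodMod (M ^ 2) F (j * k) := by
  rw [hF.isPeriodMod_iff] at h ⊢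
  obtain ⟨hA, hB⟩ := h
  obtain ⟨hA', hB'⟩ := hF.sq_dvd_sub_nat_mul hA hB j
  have hj' {x : R} (hx : M ∣ x) : M ^ 2 ∣ j * x := sq M ▸ mul_dvd_mul hj hx
  exact ⟨sub_add_cancel (F (j * k)) _ ▸ hA'.add (hj' hA),
    sub_add_cancel (F (j * k + 1) - 1) _ ▸ hB'.add (hj' hB)⟩

end IsLucasSequence

theorem period_mod_p_squared_dichotomy_general (a b : ℤ) (F : ℕ → ℤ)
    (h0 : F 0 = 0) (h1 : F 1 = 1)
    (hrec : ∀ n, F (n + 2) = a * F (n + 1) - b * F n)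
    (p : ℕ) (hp : p.Prime)
    (kp kp2 : ℕ)
    (hkp : IsLeast {k : ℕ | 0 < k ∧ ∀ n, (p : ℤ) ∣ F (n + k) - F n} kp)
    (hkp2 : IsLeast {k : ℕ | 0 < k ∧ ∀ n, ((p : ℤ) ^ 2) ∣ F (n + k) - F n} kp2) :
    kp2 = kp ∨ kp2 = p * kp := by
  have hF : IsLucasSequence a b F := ⟨h0, h1, hrec⟩
  have hkp_dvd : kp ∣ kp2 :=
    IsPeriodMod.dvd_of_isLeast hkp
      (IsPeriodMod.of_dvd (dvd_pow_self _ two_ne_zero) hkp2.1.2)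
  have hkp2_dvd : kp2 ∣ p * kp :=
    IsPeriodMod.dvd_of_isLeast hkp2 (hF.isPeriodMod_sq_mul hkp.1.2 dvd_rfl)
  obtain ⟨d, rfl⟩ := hkp_dvd
  have hd : d ∣ p := by
    rwa [mul_comm p, Nat.mul_dvd_mul_iff_left hkp.1.1] at hkp2_dvd
  rcases hp.eq_one_or_self_of_dvd d hd with rfl | rfl
  · exact Or.inl (mul_one kp)
  · exact Or.inr (mul_comm kp d)

/-- for the generalized Fibonacci sequence with `gcd(b, p) = 1`,
the minimal period modulo `p²` equals either the minimal period modulo `p` or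
`p` times it. -/
theorem period_mod_p_squared_dichotomy (a b : ℤ) (F : ℕ → ℤ)
    (h0 : F 0 = 0) (h1 : F 1 = 1)
    (hrec : ∀ n, F (n + 2) = a * F (n + 1) - b * F n)
    (p : ℕ) (hp : p.Prime) (hcop : IsCoprime b (p : ℤ))
    (kp kp2 : ℕ)
    (hkp : IsLeast {k : ℕ | 0 < k ∧ ∀ n, (p : ℤ) ∣ F (n + k) - F n} kp)
    (hkp2 : IsLeast {k : ℕ | 0 < k ∧ ∀ n, ((p : ℤ) ^ 2) ∣ F (n + k) - F n} kp2) :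
    kp2 = kp ∨ kp2 = p * kp :=
  period_mod_p_squared_dichotomy_general a b F h0 h1 hrec p hp kp kp2 hkp hkp2
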